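/- arXiv:1105.4328 — 4 statements merged into one kernel-verified Lean document; each statement's English description precedes it below -/
import Mathlib

section
/- Let r₁, r₂, ε > 0 and set c₁ = −r₁ − ε/2 and c₂ = r₂ + ε/2 (real numbers, identified with points (c₁,0), (c₂,0) on the x-axis). Then there exist real numbers s < t with (s − c₁)(t − c₁) = r₁² and (s − c₂)(t − c₂) = r₂², such that the point (s,0) lies in the open disk B((c₁,0), r₁) and (t,0) lies in the open disk B((c₂,0), r₂). Consequently, writing p₁ = (s,0), p₂ = (t,0) and R_j for the inversion across ∂B((c_j,0), r_j), one has R₁(p₂) = p₁ and R₂(p₁) = p₂. -/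
open Real Filter Metric

noncomputable section

abbrev E2 := EuclideanSpace ℝ (Fin 2)

/-- The point (a, b) in ℝ². -/
def pt (a b : ℝ) : E2 := (WithLp.equiv 2 (Fin 2 → ℝ)).symm ![a, b]

/-- Inversion (reflection) across the circle ∂B(c, r). -/
def refl2 (c : E2) (r : ℝ) (x : E2) : E2 := (r ^ 2 / ‖x - c‖ ^ 2) • (x - c) + c

/-!
Translating so that the first centre is at the origin and writing `d = c₂ - c₁`, the limit points are
`c₁ + u`, `c₁ + v` where `u v = r₁²` and `(u - d)(v - d) = r₂²`, i.e. `u + v = (d² + r₁² - r₂²) / d`.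
Disjointness `d > r₁ + r₂` makes this sum exceed `2 r₁`, so `u, v` are real and distinct, and
`0 < u < r₁ < v`; the same argument seen from the second centre puts `t` inside the second disk.
On the axis the inversion across `∂B(c, r)` is `x ↦ c + r² / (x - c)`, which swaps `s` and `t`.
-/

lemma pt_apply (a b : ℝ) (i : Fin 2) : pt a b i = ![a, b] i := rfl

lemma pt_sub (a b c d : ℝ) : pt a b - pt c d = pt (a - c) (b - d) := by
  ext i; fin_cases i <;> simp [pt_apply]

lemma pt_add (a b c d : ℝ) : pt a b + pt c d = pt (a + c) (b + d) := by
  ext i; fin_cases i <;> simp [pt_apply]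

lemma smul_pt (k a b : ℝ) : k • pt a b = pt (k * a) (k * b) := by
  ext i; fin_cases i <;> simp [pt_apply]

lemma norm_pt_zero (a : ℝ) : ‖pt a 0‖ = |a| := by
  simp [EuclideanSpace.norm_eq, pt_apply, Fin.sum_univ_two, Real.sqrt_sq_eq_abs]

lemma dist_pt_zero (a b : ℝ) : dist (pt a 0) (pt b 0) = |a - b| := by
  rw [dist_eq_norm, pt_sub, sub_zero, norm_pt_zero]

lemma refl2_pt_zero (c r x : ℝ) : refl2 (pt c 0) r (pt x 0) = pt (r ^ 2 / (x - c) + c) 0 := by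
  rw [refl2, pt_sub, sub_zero, norm_pt_zero, sq_abs, smul_pt, pt_add, mul_zero, add_zero]
  rcases eq_or_ne (x - c) 0 with hxc | hxc
  · simp [hxc]
  · field_simp

lemma refl2_pt_zero_of_mul_eq_sq {c r x y : ℝ} (hr : r ≠ 0) (h : (x - c) * (y - c) = r ^ 2) :
    refl2 (pt c 0) r (pt y 0) = pt x 0 := by
  have hy : y - c ≠ 0 := by
    rintro hy
    rw [hy, mul_zero] at h
    exact hr (pow_eq_zero_iff two_ne_zero |>.mp h.symm)
  rw [refl2_pt_zero, ← h, mul_div_cancel_right₀ _ hy, sub_add_cancel]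

lemma exists_lt_add_eq_mul_eq {m p : ℝ} (h : 4 * p < m ^ 2) :
    ∃ u v : ℝ, u < v ∧ u + v = m ∧ u * v = p := by
  have hΔ : 0 < m ^ 2 - 4 * p := by linarith
  refine ⟨(m - √(m ^ 2 - 4 * p)) / 2, (m + √(m ^ 2 - 4 * p)) / 2, ?_, by ring, ?_⟩
  · linarith [Real.sqrt_pos.mpr hΔ]
  · linear_combination (-1 / 4 : ℝ) * Real.sq_sqrt hΔ.le

lemma pos_and_lt_of_mul_eq_sq {u v r : ℝ} (hr : 0 < r) (huv : u < v) (hsum : 0 < u + v)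
    (hprod : u * v = r ^ 2) : 0 < u ∧ u < r := by
  have hu : 0 < u := by nlinarith
  exact ⟨hu, by nlinarith⟩

theorem exists_limit_points {c₁ c₂ r₁ r₂ : ℝ} (hr₁ : 0 < r₁) (hr₂ : 0 < r₂)
    (hsep : c₁ + r₁ < c₂ - r₂) :
    ∃ s t : ℝ, s < t ∧ (s - c₁) * (t - c₁) = r₁ ^ 2 ∧ (s - c₂) * (t - c₂) = r₂ ^ 2 ∧
      |s - c₁| < r₁ ∧ |t - c₂| < r₂ := by
  obtain ⟨d, rfl⟩ : ∃ d, c₂ = c₁ + d := ⟨c₂ - c₁, by ring⟩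
  have hd : 0 < d := by linarith
  have hm : 2 * r₁ < (d ^ 2 + r₁ ^ 2 - r₂ ^ 2) / d := by
    rw [lt_div_iff₀ hd]; nlinarith
  obtain ⟨u, v, huv, hsum, hprod⟩ :=
    exists_lt_add_eq_mul_eq (p := r₁ ^ 2) (by nlinarith : 4 * r₁ ^ 2 < ((d ^ 2 + r₁ ^ 2 - r₂ ^ 2) / d) ^ 2)
  have hsum' : d * (u + v) = d ^ 2 + r₁ ^ 2 - r₂ ^ 2 := by
    rw [hsum]; field_simp
  have hprod₂ : (d - v) * (d - u) = r₂ ^ 2 := by linear_combination hprod - hsum'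
  have hu := pos_and_lt_of_mul_eq_sq hr₁ huv (by nlinarith) hprod
  have hv := pos_and_lt_of_mul_eq_sq hr₂ (by linarith : d - v < d - u) (by nlinarith) hprod₂
  refine ⟨c₁ + u, c₁ + v, by linarith, by linear_combination hprod,
    by linear_combination hprod₂, ?_, ?_⟩
  · rw [add_sub_cancel_left, abs_of_pos hu.1]; exact hu.2
  · rw [abs_lt]; constructor <;> linarith

theorem stmt2 (r₁ r₂ ε : ℝ) (hr₁ : 0 < r₁) (hr₂ : 0 < r₂) (hε : 0 < ε) :
    ∃ s t : ℝ, s < t ∧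
      (s - (-r₁ - ε/2)) * (t - (-r₁ - ε/2)) = r₁ ^ 2 ∧
      (s - (r₂ + ε/2)) * (t - (r₂ + ε/2)) = r₂ ^ 2 ∧
      pt s 0 ∈ ball (pt (-r₁ - ε/2) 0) r₁ ∧
      pt t 0 ∈ ball (pt (r₂ + ε/2) 0) r₂ ∧
      refl2 (pt (-r₁ - ε/2) 0) r₁ (pt t 0) = pt s 0 ∧
      refl2 (pt (r₂ + ε/2) 0) r₂ (pt s 0) = pt t 0 := by
  obtain ⟨s, t, hst, h₁, h₂, hs, ht⟩ :=
    exists_limit_points (c₁ := -r₁ - ε/2) (c₂ := r₂ + ε/2) hr₁ hr₂ (by linarith)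
  refine ⟨s, t, hst, h₁, h₂, ?_, ?_, refl2_pt_zero_of_mul_eq_sq hr₁.ne' h₁,
    refl2_pt_zero_of_mul_eq_sq hr₂.ne' (by linear_combination h₂)⟩
  · rwa [mem_ball, dist_pt_zero]
  · rwa [mem_ball, dist_pt_zero]
end
end

section
/- Let B₁ = B(c₁, r₁) and B₂ = B(c₂, r₂) be two disjoint disks in ℝ², and let p₁ ∈ B₁, p₂ ∈ B₂ be points satisfying R₁(p₂) = p₁ and R₂(p₁) = p₂, where R_j denotes inversion across ∂B_j. Define h(x) = (1/2π)(log|x − p₁| − log|x − p₂|). Then h is constant on each circle ∂B_j; specifically, h(x) = (1/2π) log(|p₁ − c₁|/r₁) for all x ∈ ∂B₁, and h(x) = (1/2π) log(r₂/|p₂ − c₂|) for all x ∈ ∂B₂. -/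
open Real Filter Metric

noncomputable section

lemma refl2_eq_inversion (c : E2) (r : ℝ) (x : E2) :
    refl2 c r x = EuclideanGeometry.inversion c r x := by
  simp [refl2, EuclideanGeometry.inversion, dist_eq_norm, div_pow, vsub_eq_sub, vadd_eq_add]

lemma key (c p x : E2) (r : ℝ) (hr : 0 < r) (hp : p ≠ c) (hx : ‖x - c‖ = r) :
    ‖x - refl2 c r p‖ = r / ‖p - c‖ * ‖x - p‖ := by
  have hxc : x ≠ c := by
    intro h; rw [h, sub_self, norm_zero] at hx; exact hr.ne hx
  have hxmem : x ∈ Metric.sphere c r := by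
    simpa [mem_sphere_iff_norm] using hx
  have h1 : EuclideanGeometry.inversion c r x = x :=
    EuclideanGeometry.inversion_of_mem_sphere hxmem
  have h2 := EuclideanGeometry.dist_inversion_inversion hxc hp r
  rw [h1] at h2
  rw [refl2_eq_inversion, ← dist_eq_norm, h2]
  simp only [dist_eq_norm]
  rw [hx]
  have hps : ‖p - c‖ ≠ 0 := by simpa [sub_eq_zero] using hp
  field_simp

lemma norm_refl2_sub_center (c p : E2) (r : ℝ) (hp : p ≠ c) :
    ‖refl2 c r p - c‖ = r ^ 2 / ‖p - c‖ := by
  have hps : (0:ℝ) < ‖p - c‖ := by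
    simpa [norm_pos_iff, sub_eq_zero] using hp
  simp only [refl2, add_sub_cancel_right, norm_smul, Real.norm_eq_abs]
  rw [abs_of_nonneg (by positivity)]
  field_simp

theorem stmt5 (c₁ c₂ : E2) (r₁ r₂ : ℝ) (hr₁ : 0 < r₁) (hr₂ : 0 < r₂)
    (hdisj : Disjoint (closedBall c₁ r₁) (closedBall c₂ r₂))
    (p₁ p₂ : E2) (hp₁ : p₁ ∈ ball c₁ r₁) (hp₂ : p₂ ∈ ball c₂ r₂)
    (hR₁ : refl2 c₁ r₁ p₂ = p₁) (hR₂ : refl2 c₂ r₂ p₁ = p₂) :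
    (∀ x : E2, ‖x - c₁‖ = r₁ →
      (1/(2*π)) * (Real.log ‖x - p₁‖ - Real.log ‖x - p₂‖)
        = (1/(2*π)) * Real.log (‖p₁ - c₁‖ / r₁)) ∧
    (∀ x : E2, ‖x - c₂‖ = r₂ →
      (1/(2*π)) * (Real.log ‖x - p₁‖ - Real.log ‖x - p₂‖)
        = (1/(2*π)) * Real.log (r₂ / ‖p₂ - c₂‖)) := by
  have hp₁' : p₁ ∈ closedBall c₁ r₁ := ball_subset_closedBall hp₁
  have hp₂' : p₂ ∈ closedBall c₂ r₂ := ball_subset_closedBall hp₂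
  have hp₂c₁ : p₂ ≠ c₁ := by
    intro h
    exact hdisj.ne_of_mem (mem_closedBall_self hr₁.le) hp₂' h.symm
  have hp₁c₂ : p₁ ≠ c₂ := by
    intro h
    exact hdisj.ne_of_mem hp₁' (mem_closedBall_self hr₂.le) h
  have hs₁ : (0:ℝ) < ‖p₂ - c₁‖ := by simpa [norm_pos_iff, sub_eq_zero] using hp₂c₁
  have hs₂ : (0:ℝ) < ‖p₁ - c₂‖ := by simpa [norm_pos_iff, sub_eq_zero] using hp₁c₂
  have hn₁ : ‖p₁ - c₁‖ = r₁ ^ 2 / ‖p₂ - c₁‖ := by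
    rw [← hR₁]; exact norm_refl2_sub_center c₁ p₂ r₁ hp₂c₁
  have hn₂ : ‖p₂ - c₂‖ = r₂ ^ 2 / ‖p₁ - c₂‖ := by
    rw [← hR₂]; exact norm_refl2_sub_center c₂ p₁ r₂ hp₁c₂
  constructor
  · intro x hx
    have hxp₂ : x ≠ p₂ := by
      intro h
      have hx1 : x ∈ closedBall c₁ r₁ := by
        simp [mem_closedBall, dist_eq_norm, hx]
      exact hdisj.ne_of_mem hx1 hp₂' h
    have hxp₁ : x ≠ p₁ := by
      intro h
      rw [← h] at hp₁
      rw [mem_ball, dist_eq_norm, hx] at hp₁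
      exact lt_irrefl _ hp₁
    have hne₂ : ‖x - p₂‖ ≠ 0 := by simpa [sub_eq_zero] using hxp₂
    have hkey : ‖x - p₁‖ = r₁ / ‖p₂ - c₁‖ * ‖x - p₂‖ := by
      rw [← hR₁]; exact key c₁ p₂ x r₁ hr₁ hp₂c₁ hx
    have hratio : ‖p₁ - c₁‖ / r₁ = r₁ / ‖p₂ - c₁‖ := by
      rw [hn₁]; field_simp
    rw [hkey, Real.log_mul (by positivity) hne₂, hratio]
    ring
  · intro x hx
    have hxp₁ : x ≠ p₁ := by
      intro h
      have hx2 : x ∈ closedBall c₂ r₂ := by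
        simp [mem_closedBall, dist_eq_norm, hx]
      exact hdisj.ne_of_mem hp₁' hx2 h.symm
    have hxp₂ : x ≠ p₂ := by
      intro h
      rw [← h] at hp₂
      rw [mem_ball, dist_eq_norm, hx] at hp₂
      exact lt_irrefl _ hp₂
    have hne₁ : ‖x - p₁‖ ≠ 0 := by simpa [sub_eq_zero] using hxp₁
    have hkey : ‖x - p₂‖ = r₂ / ‖p₁ - c₂‖ * ‖x - p₁‖ := by
      rw [← hR₂]; exact key c₂ p₁ x r₂ hr₂ hp₁c₂ hx
    have hratio : r₂ / ‖p₂ - c₂‖ = ‖p₁ - c₂‖ / r₂ := by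
      rw [hn₂]; field_simp
    rw [hkey, Real.log_mul (by positivity) hne₁, Real.log_div hr₂.ne' hs₂.ne',
      hratio, Real.log_div hs₂.ne' hr₂.ne']
    ring
end
end

section
/- Let B₁ = B(c₁, r₁), B₂ = B(c₂, r₂) be disjoint disks in ℝ², and let p₁ ∈ B₁, p₂ ∈ B₂ satisfy R₁(p₂) = p₁ and R₂(p₁) = p₂, where R_j is inversion across ∂B_j. Then for all x ∈ ∂B₁ the tangential derivative of h(x) = (1/2π)(log|x−p₁| − log|x−p₂|) along ∂B₁ vanishes; equivalently, the vector identity ⟨(x − p₁)/|x − p₁|² − (x − p₂)/|x − p₂|², (x − c₁)^⊥⟩ = 0 holds for every x ∈ ∂B₁, where (y₁,y₂)^⊥ = (−y₂, y₁). -/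
open Real Filter Metric

noncomputable section

/-- Rotation by π/2 : (y₁, y₂)^⊥ = (−y₂, y₁). -/
def perp (x : E2) : E2 := pt (-(x 1)) (x 0)

lemma inner_perp_self (y : E2) : (inner ℝ y (perp y) : ℝ) = 0 := by
  simp [PiLp.inner_apply, perp, pt, Fin.sum_univ_two]
  ring

theorem stmt13 (c₁ c₂ : E2) (r₁ r₂ : ℝ) (hr₁ : 0 < r₁) (hr₂ : 0 < r₂)
    (hdisj : Disjoint (closedBall c₁ r₁) (closedBall c₂ r₂))
    (p₁ p₂ : E2) (hp₁ : p₁ ∈ ball c₁ r₁) (hp₂ : p₂ ∈ ball c₂ r₂)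
    (hR₁ : refl2 c₁ r₁ p₂ = p₁) (hR₂ : refl2 c₂ r₂ p₁ = p₂) :
    ∀ x : E2, ‖x - c₁‖ = r₁ →
      (inner ℝ ((‖x - p₁‖ ^ 2)⁻¹ • (x - p₁) - (‖x - p₂‖ ^ 2)⁻¹ • (x - p₂))
        (perp (x - c₁)) : ℝ) = 0 := by
  intro x hx
  set u := x - c₁ with hu
  set q₂ := p₂ - c₁ with hq2def
  have hp₂' : p₂ ∈ closedBall c₂ r₂ := ball_subset_closedBall hp₂
  have hq₂ : q₂ ≠ 0 := by
    intro h
    have hpc : p₂ = c₁ := by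
      have := sub_eq_zero.mp h; exact this
    have h1 : p₂ ∈ closedBall c₁ r₁ := by
      rw [hpc]; exact mem_closedBall_self hr₁.le
    exact Set.disjoint_left.mp hdisj h1 hp₂'
  set d := ‖q₂‖ with hd_def
  have hd : d ≠ 0 := norm_ne_zero_iff.mpr hq₂
  set t := r₁ ^ 2 / d ^ 2 with ht_def
  have ht : 0 < t := by positivity
  have hq₁ : p₁ - c₁ = t • q₂ := by
    rw [← hR₁]; unfold refl2
    rw [← hq2def, ← hd_def]
    abel
  have hxp2 : x - p₂ = u - q₂ := by rw [hu, hq2def]; abel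
  have hxp1 : x - p₁ = u - t • q₂ := by
    have : x - p₁ = u - (p₁ - c₁) := by rw [hu]; abel
    rw [this, hq₁]
  have hxcb : x ∈ closedBall c₁ r₁ := by
    rw [mem_closedBall, dist_eq_norm, hx]
  have hn2 : ‖x - p₂‖ ≠ 0 := by
    rw [norm_ne_zero_iff, sub_ne_zero]
    intro h
    rw [h] at hxcb
    exact Set.disjoint_left.mp hdisj hxcb hp₂'
  have htd : t * d ^ 2 = r₁ ^ 2 := by
    rw [ht_def, div_mul_cancel₀ _ (pow_ne_zero 2 hd)]
  have hnorm : ‖x - p₁‖ ^ 2 = t * ‖x - p₂‖ ^ 2 := by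
    rw [hxp1, hxp2]
    have e1 : ‖u - t • q₂‖ ^ 2 = ‖u‖ ^ 2 - 2 * (t * inner ℝ u q₂) + t ^ 2 * d ^ 2 := by
      rw [norm_sub_sq_real, real_inner_smul_right, norm_smul, mul_pow,
        Real.norm_eq_abs, sq_abs, hd_def]
    have e2 : ‖u - q₂‖ ^ 2 = ‖u‖ ^ 2 - 2 * inner ℝ u q₂ + d ^ 2 := by
      rw [norm_sub_sq_real, hd_def]
    rw [e1, e2, hx]
    nlinarith [htd]
  have hperp : (inner ℝ u (perp u) : ℝ) = 0 := inner_perp_self u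
  have h1 : (inner ℝ (x - p₁) (perp u) : ℝ) = -(t * inner ℝ q₂ (perp u)) := by
    rw [hxp1, inner_sub_left, real_inner_smul_left, hperp]; ring
  have h2 : (inner ℝ (x - p₂) (perp u) : ℝ) = -(inner ℝ q₂ (perp u)) := by
    rw [hxp2, inner_sub_left, hperp]; ring
  rw [inner_sub_left, real_inner_smul_left, real_inner_smul_left, h1, h2, hnorm]
  have hb : ‖x - p₂‖ ^ 2 ≠ 0 := pow_ne_zero _ hn2
  field_simp
  ring
end
end

section
/- Let r, ε > 0, a = √(rε + ε²/4), p₁ = (−a,0), p₂ = (a,0), and h(x) = (1/2π)(log|x−p₁| − log|x−p₂|). Then for every point x = (0, y) on the vertical axis, ∇h(0, y) = (1/π)·(a/(a² + y²), 0). In particular |∇h(0,y)| ≤ |∇h(0,0)| = 1/(πa) for all y, and |∇h(0,y)| ≤ C/√ε with C = 1/(π√r). -/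
open Real Filter Metric

noncomputable section

/-- The singular function for two equal disks of radius r at distance ε, with
reflection fixed points p₁ = (−a, 0), p₂ = (a, 0), a = √(rε + ε²/4). -/
def hsing (r ε : ℝ) (x : E2) : ℝ :=
  (1/(2*π)) * (Real.log ‖x - pt (-Real.sqrt (r*ε + ε^2/4)) 0‖
    - Real.log ‖x - pt (Real.sqrt (r*ε + ε^2/4)) 0‖)

/-!
The gradient of `log ‖x - p‖` is `(x - p) / ‖x - p‖²`. On the perpendicular bisector `x = (0, y)`
both poles are at distance `√(a² + y²)`, so the vertical components of the two terms cancel and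
the horizontal ones add up to `2a / (a² + y²)`. This is largest at `y = 0`, and `a ≥ √(rε)`.
-/

theorem hasGradientAt_log_norm_sub {F : Type*} [NormedAddCommGroup F] [InnerProductSpace ℝ F]
    [CompleteSpace F] {p x : F} (hx : x ≠ p) :
    HasGradientAt (fun z => Real.log ‖z - p‖) ((‖x - p‖ ^ 2)⁻¹ • (x - p)) x := by
  have hne : ‖x - p‖ ^ 2 ≠ 0 := pow_ne_zero 2 (norm_ne_zero_iff.mpr (sub_ne_zero.mpr hx))
  have hsq : HasFDerivAt (fun z => ‖z - p‖ ^ 2) (2 • innerSL ℝ (x - p)) x := by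
    simpa using ((hasFDerivAt_id x).sub_const p).norm_sq
  have hlog := (hsq.log hne).const_mul (1 / 2)
  have hfun : (fun z => 1 / 2 * Real.log (‖z - p‖ ^ 2)) = fun z => Real.log ‖z - p‖ := by
    funext z
    rw [Real.log_pow]
    ring
  rw [hfun] at hlog
  refine hlog.congr_fderiv ?_
  ext v
  simp only [one_div, map_smul, smul_apply, coe_innerSL_apply, nsmul_eq_mul, Nat.cast_ofNat,
    smul_eq_mul, InnerProductSpace.toDual_apply_apply]
  field_simp

lemma pt_smul (s a b : ℝ) : s • pt a b = pt (s * a) (s * b) := by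
  ext i; fin_cases i <;> simp [pt]

lemma norm_pt (a b : ℝ) : ‖pt a b‖ = √(a ^ 2 + b ^ 2) := by
  simp [EuclideanSpace.norm_eq, pt, Fin.sum_univ_two]

theorem hasGradientAt_log_dipole {a : ℝ} (ha : a ≠ 0) (y : ℝ) :
    HasGradientAt (fun x => Real.log ‖x - pt (-a) 0‖ - Real.log ‖x - pt a 0‖)
      (pt (2 * a / (a ^ 2 + y ^ 2)) 0) (pt 0 y) := by
  have hd : a ^ 2 + y ^ 2 ≠ 0 := by positivity
  have hdist (b : ℝ) (hb : b ^ 2 = a ^ 2) : ‖pt 0 y - pt b 0‖ ^ 2 = a ^ 2 + y ^ 2 := by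
    rw [pt_sub, norm_pt, Real.sq_sqrt (by positivity)]
    simp [hb]
  have hne (b : ℝ) (hb : b ^ 2 = a ^ 2) : pt 0 y ≠ pt b 0 := by
    intro h
    simpa [h, hd] using (hdist b hb).symm
  have hleft := hasGradientAt_log_norm_sub (hne (-a) (neg_sq a))
  have hright := hasGradientAt_log_norm_sub (hne a rfl)
  rw [hdist (-a) (neg_sq a)] at hleft
  rw [hdist a rfl] at hright
  refine (hleft.hasFDerivAt.sub hright.hasFDerivAt).congr_fderiv ?_
  rw [← map_sub, ← smul_sub, pt_sub, pt_sub, pt_sub, pt_smul]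
  congr 2 <;> field_simp <;> ring

lemma div_sq_add_sq_le_inv {a : ℝ} (ha : 0 < a) (y : ℝ) : a / (a ^ 2 + y ^ 2) ≤ a⁻¹ := by
  rw [div_le_iff₀ (by positivity)]
  field_simp
  nlinarith [sq_nonneg y]

theorem gradient_hsing_pt_zero {r ε : ℝ} (h : 0 < r * ε + ε ^ 2 / 4) (y : ℝ) :
    gradient (hsing r ε) (pt 0 y)
      = (1 / π) • pt (√(r * ε + ε ^ 2 / 4) / (√(r * ε + ε ^ 2 / 4) ^ 2 + y ^ 2)) 0 := by
  set a := √(r * ε + ε ^ 2 / 4)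
  have hgrad : HasGradientAt (hsing r ε)
      ((1 / (2 * π)) • pt (2 * a / (a ^ 2 + y ^ 2)) 0) (pt 0 y) := by
    rw [hasGradientAt_iff_hasFDerivAt, map_smul]
    exact (hasGradientAt_log_dipole (Real.sqrt_pos.mpr h).ne' y).hasFDerivAt.const_mul _
  rw [hgrad.gradient, pt_smul, pt_smul, mul_zero, mul_zero]
  congr 1
  field_simp

theorem stmt19 (r ε : ℝ) (hr : 0 < r) (hε : 0 < ε) :
    ∀ y : ℝ,
      gradient (hsing r ε) (pt 0 y)
        = (1/π) • pt (Real.sqrt (r*ε + ε^2/4) / (Real.sqrt (r*ε + ε^2/4) ^ 2 + y ^ 2)) 0 ∧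
      ‖gradient (hsing r ε) (pt 0 y)‖ ≤ ‖gradient (hsing r ε) (pt 0 0)‖ ∧
      ‖gradient (hsing r ε) (pt 0 0)‖ = 1/(π * Real.sqrt (r*ε + ε^2/4)) ∧
      ‖gradient (hsing r ε) (pt 0 y)‖ ≤ (1/(π * Real.sqrt r)) / Real.sqrt ε := by
  intro y
  have hq : 0 < r * ε + ε ^ 2 / 4 := by positivity
  set a := √(r * ε + ε ^ 2 / 4)
  have ha : 0 < a := Real.sqrt_pos.mpr hq
  have hnorm (z : ℝ) : ‖gradient (hsing r ε) (pt 0 z)‖ = π⁻¹ * (a / (a ^ 2 + z ^ 2)) := by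
    rw [gradient_hsing_pt_zero hq, norm_smul, norm_pt, zero_pow two_ne_zero, add_zero,
      Real.sqrt_sq (by positivity), one_div, norm_inv, Real.norm_of_nonneg Real.pi_pos.le]
  have hnorm0 : ‖gradient (hsing r ε) (pt 0 0)‖ = 1 / (π * a) := by
    rw [hnorm, zero_pow two_ne_zero, add_zero]
    field_simp
  have hle : ‖gradient (hsing r ε) (pt 0 y)‖ ≤ 1 / (π * a) := by
    rw [hnorm, one_div, mul_inv]
    gcongr
    exact div_sq_add_sq_le_inv ha y
  refine ⟨gradient_hsing_pt_zero hq y, hnorm0 ▸ hle, hnorm0, hle.trans ?_⟩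
  have hra : √r * √ε ≤ a := by
    rw [← Real.sqrt_mul hr.le]
    exact Real.sqrt_le_sqrt (by nlinarith)
  rw [div_div, one_div_le_one_div (by positivity) (by positivity), mul_assoc]
  gcongr
end
end
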